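/- Let φ : ℝ² → ℝ be three times continuously differentiable in (x₃,x₅), with ∂²φ/∂x₃² nowhere zero, satisfying the Hirota-type equation φ_{x₃x₃}·φ_{x₅x₅} − (φ_{x₃x₅})² + (φ_{x₃x₃})³ = 0, where subscripts denote partial derivatives. Define u := φ_{x₃x₅}/φ_{x₃x₃} and v := −2φ_{x₃x₃}, and introduce variables x := x₃ and t := −x₅. Then (u,v) satisfies the 1-layer Benney system: ∂u/∂t + u·∂u/∂x + ∂v/∂x = 0 and ∂v/∂t + ∂(u·v)/∂x = 0. -/

import Mathlib

/-!
Write `a = φ₃₃`, `b = φ₃₅`, `c = φ₅₅`, so that `u = b / a` and `v = -2a`; symmetry of second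
derivatives gives the compatibility conditions `a₅ = b₃` and `b₅ = c₃`. As `u v = -2b`, the
second Benney equation is just `a₅ = b₃`. For the first, multiplying by `a³` and eliminating
`b²` with the Hirota equation `a c - b² + a³ = 0` leaves `-a` times its `x₃`-derivative
`a₃ c + a c₃ - 2 b b₃ + 3 a² a₃`.
-/

/-- Partial derivative in the `x₃` direction on `ℝ²` with coordinates `(x₃, x₅)`. -/
noncomputable def pd3 (F : ℝ × ℝ → ℝ) : ℝ × ℝ → ℝ := fun p => fderiv ℝ F p (1, 0)

/-- Partial derivative in the `x₅` direction on `ℝ²` with coordinates `(x₃, x₅)`. -/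
noncomputable def pd5 (F : ℝ × ℝ → ℝ) : ℝ × ℝ → ℝ := fun p => fderiv ℝ F p (0, 1)

section DirectionalDerivative

variable {E : Type*} [NormedAddCommGroup E] [NormedSpace ℝ E] {x : E}

theorem fderiv_fun_mul_apply {f g : E → ℝ} (hf : DifferentiableAt ℝ f x)
    (hg : DifferentiableAt ℝ g x) (v : E) :
    fderiv ℝ (fun y => f y * g y) x v = fderiv ℝ f x v * g x + f x * fderiv ℝ g x v := by
  rw [fderiv_fun_mul hf hg]
  simp only [add_apply, smul_apply, smul_eq_mul]
  ring

theorem fderiv_fun_div_apply {f g : E → ℝ} (hf : DifferentiableAt ℝ f x)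
    (hg : DifferentiableAt ℝ g x) (hx : g x ≠ 0) (v : E) :
    fderiv ℝ (fun y => f y / g y) x v
      = (fderiv ℝ f x v * g x - f x * fderiv ℝ g x v) / g x ^ 2 := by
  have hinv : HasFDerivAt (fun y => (g y)⁻¹) ((-(g x ^ 2)⁻¹) • fderiv ℝ g x) x :=
    (hasDerivAt_inv hx).comp_hasFDerivAt x hg.hasFDerivAt
  simp only [div_eq_mul_inv]
  rw [fderiv_fun_mul_apply hf hinv.differentiableAt, hinv.fderiv]
  simp only [smul_apply, smul_eq_mul]
  field_simp
  ring

theorem fderiv_const_mul_apply {f : E → ℝ} (hf : DifferentiableAt ℝ f x) (r : ℝ) (v : E) :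
    fderiv ℝ (fun y => r * f y) x v = r * fderiv ℝ f x v := by
  simp [fderiv_const_mul hf]

theorem fderiv_fderiv_apply_comm {F : Type*} [NormedAddCommGroup F] [NormedSpace ℝ F]
    {f : E → F} (hf : ContDiff ℝ 2 f) (x v w : E) :
    fderiv ℝ (fun y => fderiv ℝ f y v) x w = fderiv ℝ (fun y => fderiv ℝ f y w) x v := by
  have hdiff : DifferentiableAt ℝ (fderiv ℝ f) x :=
    (hf.fderiv_right (by norm_num)).differentiable one_ne_zero x
  simp only [fderiv_clm_apply hdiff (differentiableAt_const _)]
  simpa using hf.contDiffAt.isSymmSndFDerivAt (by simp) w v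

end DirectionalDerivative

section Benney

variable {E : Type*} [NormedAddCommGroup E] [NormedSpace ℝ E] {a b c : E → ℝ}

theorem hirota_fderiv_apply_eq_zero (ha : Differentiable ℝ a) (hb : Differentiable ℝ b)
    (hc : Differentiable ℝ c) (hH : ∀ y, a y * c y - b y ^ 2 + a y ^ 3 = 0) (x v : E) :
    fderiv ℝ a x v * c x + a x * fderiv ℝ c x v - 2 * b x * fderiv ℝ b x v
      + 3 * a x ^ 2 * fderiv ℝ a x v = 0 := by
  have hL := (((ha x).hasFDerivAt.fun_mul (hc x).hasFDerivAt).fun_sub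
    ((hb x).hasFDerivAt.pow 2)).fun_add ((ha x).hasFDerivAt.pow 3)
  rw [show (fun y => a y * c y - b y ^ 2 + a y ^ 3) = fun _ => 0 from funext hH] at hL
  have hL0 := congrArg (· v) ((hasFDerivAt_const (0 : ℝ) x).unique hL)
  simp only [zero_apply, add_apply, sub_apply, smul_apply, smul_eq_mul, nsmul_eq_mul] at hL0
  norm_num at hL0
  linear_combination -hL0

theorem benney_u_equation_of_hirota (ha : Differentiable ℝ a) (hb : Differentiable ℝ b)
    (hc : Differentiable ℝ c) (hH : ∀ y, a y * c y - b y ^ 2 + a y ^ 3 = 0) {x : E}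
    (hx : a x ≠ 0) {v w : E} (hab : fderiv ℝ a x w = fderiv ℝ b x v)
    (hbc : fderiv ℝ b x w = fderiv ℝ c x v) :
    -fderiv ℝ (fun y => b y / a y) x w + b x / a x * fderiv ℝ (fun y => b y / a y) x v
      + fderiv ℝ (fun y => -2 * a y) x v = 0 := by
  rw [fderiv_fun_div_apply (hb x) (ha x) hx, fderiv_fun_div_apply (hb x) (ha x) hx,
    fderiv_const_mul_apply (ha x), hab, hbc]
  field_simp
  linear_combination -a x * hirota_fderiv_apply_eq_zero ha hb hc hH x v
    + fderiv ℝ a x v * hH x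

theorem benney_v_equation_of_fderiv_eq (ha : Differentiable ℝ a) (hb : Differentiable ℝ b)
    (hne : ∀ y, a y ≠ 0) {x v w : E} (hab : fderiv ℝ a x w = fderiv ℝ b x v) :
    -fderiv ℝ (fun y => -2 * a y) x w + fderiv ℝ (fun y => b y / a y * (-2 * a y)) x v = 0 := by
  have huv : (fun y => b y / a y * (-2 * a y)) = fun y => -2 * b y := by
    funext y
    field_simp [hne y]
  rw [huv, fderiv_const_mul_apply (ha x), fderiv_const_mul_apply (hb x), hab]
  ring

end Benney

theorem ContDiff.pd3 {m n : WithTop ℕ∞} {F : ℝ × ℝ → ℝ} (hF : ContDiff ℝ n F)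
    (hmn : m + 1 ≤ n) : ContDiff ℝ m (pd3 F) :=
  (hF.fderiv_right hmn).clm_apply contDiff_const

theorem ContDiff.pd5 {m n : WithTop ℕ∞} {F : ℝ × ℝ → ℝ} (hF : ContDiff ℝ n F)
    (hmn : m + 1 ≤ n) : ContDiff ℝ m (pd5 F) :=
  (hF.fderiv_right hmn).clm_apply contDiff_const

theorem pd5_pd3_comm {F : ℝ × ℝ → ℝ} (hF : ContDiff ℝ 2 F) : pd5 (pd3 F) = pd3 (pd5 F) :=
  funext fun p => fderiv_fderiv_apply_comm hF p (1, 0) (0, 1)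

/-- If `φ` is C³, `φ_{x₃x₃}` is nowhere zero and `φ` satisfies the Hirota-type
equation `φ_{x₃x₃}φ_{x₅x₅} − (φ_{x₃x₅})² + (φ_{x₃x₃})³ = 0`, then
`u := φ_{x₃x₅}/φ_{x₃x₃}`, `v := −2φ_{x₃x₃}` satisfy the 1-layer Benney system in
the variables `x := x₃`, `t := −x₅` (so `∂/∂t = −∂/∂x₅`). -/
theorem benney_from_hirota (φ : ℝ × ℝ → ℝ) (hφ : ContDiff ℝ 3 φ)
    (hne : ∀ p, pd3 (pd3 φ) p ≠ 0)
    (hHirota : ∀ p, pd3 (pd3 φ) p * pd5 (pd5 φ) p - (pd5 (pd3 φ) p)^2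
        + (pd3 (pd3 φ) p)^3 = 0) :
    (∀ p, -(pd5 (fun q => pd5 (pd3 φ) q / pd3 (pd3 φ) q) p)
        + (pd5 (pd3 φ) p / pd3 (pd3 φ) p)
          * pd3 (fun q => pd5 (pd3 φ) q / pd3 (pd3 φ) q) p
        + pd3 (fun q => -2 * pd3 (pd3 φ) q) p = 0) ∧
    (∀ p, -(pd5 (fun q => -2 * pd3 (pd3 φ) q) p)
        + pd3 (fun q => (pd5 (pd3 φ) q / pd3 (pd3 φ) q) * (-2 * pd3 (pd3 φ) q)) p
          = 0) := by
  have h3 : ContDiff ℝ 2 (pd3 φ) := hφ.pd3 (by norm_num)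
  have h5 : ContDiff ℝ 2 (pd5 φ) := hφ.pd5 (by norm_num)
  have ha5 : pd5 (pd3 (pd3 φ)) = pd3 (pd5 (pd3 φ)) := pd5_pd3_comm h3
  have hb5 : pd5 (pd5 (pd3 φ)) = pd3 (pd5 (pd5 φ)) := by
    rw [pd5_pd3_comm (hφ.of_le (by norm_num)), pd5_pd3_comm h5]
  have ha : Differentiable ℝ (pd3 (pd3 φ)) :=
    (h3.pd3 (m := 1) (by norm_num)).differentiable one_ne_zero
  have hb : Differentiable ℝ (pd5 (pd3 φ)) :=
    (h3.pd5 (m := 1) (by norm_num)).differentiable one_ne_zero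
  have hc : Differentiable ℝ (pd5 (pd5 φ)) :=
    (h5.pd5 (m := 1) (by norm_num)).differentiable one_ne_zero
  exact ⟨fun p => benney_u_equation_of_hirota ha hb hc hHirota (hne p)
      (congrFun ha5 p) (congrFun hb5 p),
    fun p => benney_v_equation_of_fderiv_eq ha hb hne (congrFun ha5 p)⟩
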